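/- Let A, C > 0, B ≥ 0 with B² ≤ AC, and define G₂(x) = A⁵x³ + 3A⁴Cx² + 3A³C²x − 12A²B²Cx + A²C³ − 12AB²C² + 16B⁴C. Then for all x ≥ 0 with Ax/C ≥ 2√3 − 1, G₂(x) ≥ 0. -/

import Mathlib

/-! With `u = A x + C` the polynomial collapses to `G₂ = A²u³ − 12AB²Cu + 16B⁴C`, and
`4 G₂ = C (8B² − 3Au)² + A²u² (4u − 9C)`. So `G₂ ≥ 0` as soon as `4u ≥ 9C`, i.e. `A x ≥ 5C/4`,
which the threshold `2√3 − 1 > 5/4` guarantees. -/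

lemma cubic_nonneg_of_nine_mul_le_four_mul {a b c u : ℝ} (hc : 0 ≤ c) (hu : 9 * c ≤ 4 * u) :
    0 ≤ a ^ 2 * u ^ 3 - 12 * a * b * c * u + 16 * b ^ 2 * c := by
  have hsos : 4 * (a ^ 2 * u ^ 3 - 12 * a * b * c * u + 16 * b ^ 2 * c)
      = c * (8 * b - 3 * a * u) ^ 2 + (a * u) ^ 2 * (4 * u - 9 * c) := by ring
  have : 0 ≤ c * (8 * b - 3 * a * u) ^ 2 + (a * u) ^ 2 * (4 * u - 9 * c) := by
    have : 0 ≤ 4 * u - 9 * c := by linarith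
    positivity
  linarith

lemma five_div_four_le_two_mul_sqrt_three_sub_one : (5 / 4 : ℝ) ≤ 2 * √3 - 1 := by
  have : (9 / 8 : ℝ) ≤ √3 := Real.le_sqrt_of_sq_le (by norm_num)
  linarith

theorem stmt_12_general (A B C : ℝ) (hC : 0 < C) (x : ℝ)
    (hk : 2 * Real.sqrt 3 - 1 ≤ A * x / C) :
    0 ≤ A ^ 5 * x ^ 3 + 3 * A ^ 4 * C * x ^ 2 + 3 * A ^ 3 * C ^ 2 * x
        - 12 * A ^ 2 * B ^ 2 * C * x + A ^ 2 * C ^ 3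
        - 12 * A * B ^ 2 * C ^ 2 + 16 * B ^ 4 * C := by
  have hAx : 5 / 4 * C ≤ A * x :=
    (le_div_iff₀ hC).mp (five_div_four_le_two_mul_sqrt_three_sub_one.trans hk)
  have hG₂ := cubic_nonneg_of_nine_mul_le_four_mul (a := A) (b := B ^ 2) hC.le
    (show 9 * C ≤ 4 * (A * x + C) by linarith)
  convert hG₂ using 1
  ring

/-- Polynomial inequality from Appendix C: for `A, C > 0`, `B ≥ 0` with
`B² ≤ A C`, the polynomial `G₂` is nonnegative whenever `A x / C ≥ 2√3 − 1`. -/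
theorem stmt_12 (A B C : ℝ) (hA : 0 < A) (hC : 0 < C) (hB : 0 ≤ B)
    (hBAC : B ^ 2 ≤ A * C) (x : ℝ) (hx : 0 ≤ x)
    (hk : 2 * Real.sqrt 3 - 1 ≤ A * x / C) :
    0 ≤ A ^ 5 * x ^ 3 + 3 * A ^ 4 * C * x ^ 2 + 3 * A ^ 3 * C ^ 2 * x
        - 12 * A ^ 2 * B ^ 2 * C * x + A ^ 2 * C ^ 3
        - 12 * A * B ^ 2 * C ^ 2 + 16 * B ^ 4 * C :=
  stmt_12_general A B C hC x hk
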